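/- Let σ be a polyhedron in ℝ^n, ω ∈ σ, and v ∈ ℝ^n. Then there exists ε₀ > 0 such that for all 0 < ε < ε₀: σ ∩ (σ' + εv) ≠ ∅ is equivalent to link_ω(σ) ∩ (link_ω(σ') + v) ≠ ∅, whenever σ' is a polyhedron containing ω. More precisely: for polyhedra σ, σ' containing ω, ω ∈ lim_{ε→0^+} σ ∩ (σ' + εv) if and only if link_ω(σ) ∩ (link_ω(σ') + v) ≠ ∅. -/

import Mathlib

/-!
Polyhedra are convex. If `p ∈ σ` and `p - εv ∈ σ'` for a single `ε > 0`, convexity puts the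
segments from `ω` to `p` and to `p - εv` inside `σ` and `σ'`, so `u = ε⁻¹ (p - ω)` lies in
`link_ω σ` and `u - v` in `link_ω σ'`. Conversely, if `u` and `u - v` are in the links, then
`ω + εu ∈ σ ∩ (σ' + εv)` for all small `ε > 0`, and these points tend to `ω`.
-/

open Pointwise RealInnerProductSpace

/-- A polyhedron in `ℝ^n`: a finite intersection of closed half-spaces. -/
def IsPolyhedron {n : ℕ} (σ : Set (EuclideanSpace ℝ (Fin n))) : Prop :=
  ∃ (k : ℕ) (a : Fin k → EuclideanSpace ℝ (Fin n)) (b : Fin k → ℝ),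
    σ = {x | ∀ i, ⟪a i, x⟫ ≤ b i}

/-- The link of a set `S ⊆ ℝ^n` at a point `ω`. -/
def linkSet {n : ℕ} (ω : EuclideanSpace ℝ (Fin n)) (S : Set (EuclideanSpace ℝ (Fin n))) :
    Set (EuclideanSpace ℝ (Fin n)) :=
  {u | ∃ δ : ℝ, 0 < δ ∧ ∀ ε : ℝ, 0 < ε → ε < δ → ω + ε • u ∈ S}

open Filter Topology

section

variable {n : ℕ}

theorem IsPolyhedron.convex {σ : Set (EuclideanSpace ℝ (Fin n))} (hσ : IsPolyhedron σ) :
    Convex ℝ σ := by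
  obtain ⟨k, a, b, rfl⟩ := hσ
  simp only [Set.ofPred_forall]
  exact convex_iInter fun i => convex_halfSpace_le (innerₗ _ (a i)).isLinear (b i)

theorem mem_linkSet_iff_eventually {ω u : EuclideanSpace ℝ (Fin n)}
    {S : Set (EuclideanSpace ℝ (Fin n))} :
    u ∈ linkSet ω S ↔ ∀ᶠ ε in 𝓝[>] (0 : ℝ), ω + ε • u ∈ S := by
  rw [(nhdsGT_basis 0).eventually_iff]
  exact exists_congr fun δ => and_congr_right fun _ =>
    ⟨fun h ε hε => h ε hε.1 hε.2, fun h ε h₀ hδ => h ⟨h₀, hδ⟩⟩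

theorem Convex.inv_smul_sub_mem_linkSet {S : Set (EuclideanSpace ℝ (Fin n))}
    (hS : Convex ℝ S) {ω p : EuclideanSpace ℝ (Fin n)} (hω : ω ∈ S) (hp : p ∈ S)
    {ε : ℝ} (hε : 0 < ε) : ε⁻¹ • (p - ω) ∈ linkSet ω S := by
  refine ⟨ε, hε, fun t ht htε => ?_⟩
  rw [smul_smul]
  exact hS.add_smul_sub_mem hω hp
    ⟨by positivity, by rw [← div_eq_mul_inv, div_le_one hε]; exact htε.le⟩

end

/-- For polyhedra `σ, σ'` containing a point `ω` and a vector `v`,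
`ω ∈ lim_{ε→0⁺} σ ∩ (σ' + εv)` if and only if `link_ω(σ) ∩ (link_ω(σ') + v) ≠ ∅`. -/
theorem limit_point_iff_link_inter_nonempty {n : ℕ}
    (σ σ' : Set (EuclideanSpace ℝ (Fin n))) (hσ : IsPolyhedron σ) (hσ' : IsPolyhedron σ')
    (ω : EuclideanSpace ℝ (Fin n)) (hωσ : ω ∈ σ) (hωσ' : ω ∈ σ')
    (v : EuclideanSpace ℝ (Fin n)) :
    (∀ δ : ℝ, 0 < δ → ∃ ε : ℝ, 0 < ε ∧
        ∃ p ∈ σ ∩ (σ' + ({ε • v} : Set (EuclideanSpace ℝ (Fin n)))), dist p ω < δ)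
      ↔ (linkSet ω σ ∩ (linkSet ω σ' + ({v} : Set (EuclideanSpace ℝ (Fin n))))).Nonempty := by
  constructor
  · intro H
    obtain ⟨ε, hε, _, ⟨hpσ, q, hqσ', _, rfl, rfl⟩, -⟩ := H 1 one_pos
    refine ⟨_, hσ.convex.inv_smul_sub_mem_linkSet hωσ hpσ hε, _,
      hσ'.convex.inv_smul_sub_mem_linkSet hωσ' hqσ' hε, v, rfl, ?_⟩
    beta_reduce
    rw [smul_sub, smul_sub, smul_add, inv_smul_smul₀ hε.ne']
    abel
  · rintro ⟨_, hu, w, hw, v, rfl, rfl⟩ δ hδ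
    have hclose : ∀ᶠ ε in 𝓝[>] (0 : ℝ), dist (ω + ε • (w + v)) ω < δ := by
      have : Tendsto (fun ε : ℝ => ω + ε • (w + v)) (𝓝 0) (𝓝 ω) :=
        (by fun_prop : Continuous fun ε : ℝ => ω + ε • (w + v)).tendsto' 0 ω (by simp)
      exact Metric.tendsto_nhds.mp (this.mono_left nhdsWithin_le_nhds) δ hδ
    obtain ⟨ε, hε, huσ, hwσ', hdist⟩ := (eventually_mem_nhdsWithin.and
      ((mem_linkSet_iff_eventually.mp hu).and
        ((mem_linkSet_iff_eventually.mp hw).and hclose))).exists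
    refine ⟨ε, hε, _, ⟨huσ, ?_⟩, hdist⟩
    rw [smul_add, ← add_assoc]
    exact Set.add_mem_add hwσ' rfl
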